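/- arXiv:1511.08930 — 2 statements merged into one kernel-verified Lean document; each statement's English description precedes it below -/
import Mathlib

section
/- Let H be the graded commutative ℝ-algebra with H⁰ = ℝ, H² = span(a₁,…,a_k) with k ≥ 2, H⁴ = span(a₁²,…,a_k²), and all other graded pieces in degrees ≤ 4 zero, subject to the relations aᵢ·aⱼ = 0 for i ≠ j, where the elements a₁²,…,a_k² are linearly independent. Form the DGA A = H ⊗ ∧(z) with deg z = 3 and differential d determined by d|_H = 0 and dz = a₁². Then the triple Massey product ⟨[a₁],[a₁],[a₂]⟩ is defined in H⁵(A, d) and is nonzero (it equals the class of a₂·z, which is not in the indeterminacy [a₁]·H³(A) + [a₂]·H³(A)); consequently the DGA (A, d) is not formal. -/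
/-- A (graded-commutative) differential graded algebra over ℝ, presented as an
ℝ-algebra `A` with an internal grading `g`, and a differential `d` of degree `+1`
which squares to zero and satisfies the graded Leibniz rule; homogeneous elements
graded-commute. -/
def IsDGA {A : Type} [Ring A] [Algebra ℝ A] (g : ℕ → Submodule ℝ A) (d : A →ₗ[ℝ] A) : Prop :=
  DirectSum.IsInternal g ∧
  (1 : A) ∈ g 0 ∧
  (∀ i j : ℕ, ∀ a ∈ g i, ∀ b ∈ g j, a * b ∈ g (i + j)) ∧
  (∀ n : ℕ, ∀ a ∈ g n, d a ∈ g (n + 1)) ∧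
  (∀ a : A, d (d a) = 0) ∧
  (∀ i : ℕ, ∀ a ∈ g i, ∀ b : A, d (a * b) = d a * b + ((-1 : ℝ)) ^ i • (a * d b)) ∧
  (∀ i j : ℕ, ∀ a ∈ g i, ∀ b ∈ g j, a * b = ((-1 : ℝ)) ^ (i * j) • (b * a))
/-- A bundled differential graded algebra over ℝ. -/
structure FDGA where
  carrier : Type
  [ring : Ring carrier]
  [alg : Algebra ℝ carrier]
  g : ℕ → Submodule ℝ carrier
  d : carrier →ₗ[ℝ] carrier
  isdga : IsDGA g d

attribute [instance] FDGA.ring FDGA.alg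

/-- A quasi-isomorphism of DGAs. -/
def IsQuasiIso {A B : Type} [Ring A] [Algebra ℝ A] [Ring B] [Algebra ℝ B]
    (gA : ℕ → Submodule ℝ A) (dA : A →ₗ[ℝ] A)
    (gB : ℕ → Submodule ℝ B) (dB : B →ₗ[ℝ] B) (φ : A →ₐ[ℝ] B) : Prop :=
  (∀ a : A, φ (dA a) = dB (φ a)) ∧
  (∀ n : ℕ, ∀ a ∈ gA n, φ a ∈ gB n) ∧
  (∀ n : ℕ, ∀ a ∈ gA n, dA a = 0 → (∃ s : B, dB s = φ a) → ∃ c : A, dA c = a) ∧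
  (∀ n : ℕ, ∀ b ∈ gB n, dB b = 0 → ∃ a ∈ gA n, dA a = 0 ∧ ∃ s : B, φ a - b = dB s)

/-- A DGA is formal if it admits a quasi-isomorphism to a DGA with zero differential
(equivalently, to its cohomology equipped with the zero differential). -/
def IsFormal {A : Type} [Ring A] [Algebra ℝ A]
    (g : ℕ → Submodule ℝ A) (d : A →ₗ[ℝ] A) : Prop :=
  ∃ (Y : FDGA) (φ : A →ₐ[ℝ] Y.carrier), Y.d = 0 ∧ IsQuasiIso g d Y.g Y.d φ


set_option maxHeartbeats 1000000 in
set_option synthInstance.maxHeartbeats 400000 in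
lemma proj_lemma {A : Type} [Ring A] [Algebra ℝ A] (g : ℕ → Submodule ℝ A) (d : A →ₗ[ℝ] A)
    [DirectSum.Decomposition g]
    (hdeg : ∀ n : ℕ, ∀ a ∈ g n, d a ∈ g (n + 1)) (c : A) :
    ((DirectSum.decompose g (d c) 5 : A)) = d ((DirectSum.decompose g c 4 : A)) := by
  induction c using DirectSum.Decomposition.inductionOn g with
  | zero => simp
  | @homogeneous i m =>
      have hdm : d (m : A) ∈ g (i + 1) := hdeg i m m.2
      by_cases hi : i = 4
      · subst hi
        rw [DirectSum.decompose_of_mem_same g hdm, DirectSum.decompose_coe]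
        simp
      · rw [DirectSum.decompose_of_mem_ne g hdm (by omega), DirectSum.decompose_coe,
          DirectSum.of_eq_of_ne _ _ _ (Ne.symm hi)]
        simp
  | add m m' hm hm' =>
      rw [map_add, DirectSum.decompose_add, DirectSum.add_apply, Submodule.coe_add, hm, hm',
        DirectSum.decompose_add, DirectSum.add_apply, Submodule.coe_add, map_add]

/-- in the model A = H ⊗ ∧(z) of a 7-dimensional 3-Sasakian manifold with
b₂ = k ≥ 2 (H⁰ = ℝ, H² = span(a₁,…,a_k) with aᵢ·aⱼ = 0 for i ≠ j and a₁²,…,a_k²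
linearly independent, deg z = 3, dz = a₁²), the Massey product ⟨[a₁],[a₁],[a₂]⟩ is
defined and nontrivial, and consequently the DGA (A, d) is not formal. -/
theorem three_sasakian_model_nonformal
    {A : Type} [Ring A] [Algebra ℝ A]
    (g : ℕ → Submodule ℝ A) (d : A →ₗ[ℝ] A) (hA : IsDGA g d)
    (k : ℕ) (hk : 2 ≤ k) (a : Fin k → A) (z : A)
    (ha2 : ∀ i, a i ∈ g 2) (hacl : ∀ i, d (a i) = 0)
    (horth : ∀ i j, i ≠ j → a i * a j = 0)
    (hz : z ∈ g 3) (hdz : d z = a ⟨0, by omega⟩ * a ⟨0, by omega⟩)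
    (hind4 : LinearIndependent ℝ (fun i => a i * a i))
    (hind5 : LinearIndependent ℝ (fun i => a i * z))
    -- structure of the graded pieces of H ⊗ ∧(z) in low degrees
    (h1 : g 1 = ⊥)
    (h2 : g 2 = Submodule.span ℝ (Set.range a))
    (h3 : g 3 = Submodule.span ℝ {z})
    (h4 : g 4 = Submodule.span ℝ (Set.range fun i => a i * a i))
    (h5 : g 5 = Submodule.span ℝ (Set.range fun i => a i * z))
    -- d vanishes on the H-part in degree 4
    (hd4 : ∀ w ∈ g 4, d w = 0) :
    -- the Massey product ⟨[a₁],[a₁],[a₂]⟩ is defined …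
    (∃ x ∈ g 3, ∃ y ∈ g 3, d x = a ⟨0, by omega⟩ * a ⟨0, by omega⟩ ∧ d y = a ⟨0, by omega⟩ * a ⟨1, by omega⟩) ∧
    -- … it is nontrivial: no choice of data makes the representative lie in the
    -- indeterminacy [a₁]·H³(A) + [a₂]·H³(A) + exact
    (∀ x ∈ g 3, ∀ y ∈ g 3, d x = a ⟨0, by omega⟩ * a ⟨0, by omega⟩ → d y = a ⟨0, by omega⟩ * a ⟨1, by omega⟩ →
      ∀ u ∈ g 3, ∀ v ∈ g 3, d u = 0 → d v = 0 → ∀ s ∈ g 4,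
        a ⟨0, by omega⟩ * y + ((-1 : ℝ)) ^ (2 + 1) • (x * a ⟨1, by omega⟩) ≠ a ⟨0, by omega⟩ * u + a ⟨1, by omega⟩ * v + d s) ∧
    -- consequently, (A, d) is not formal
    ¬ IsFormal g d := by
  obtain ⟨hint, hone, hmul, hdeg, hdd, hleib, hgc⟩ := hA
  set a0 : A := a ⟨0, by omega⟩ with ha0def
  set a1 : A := a ⟨1, by omega⟩ with ha1def
  have hne01 : (⟨0, by omega⟩ : Fin k) ≠ ⟨1, by omega⟩ := by
    intro h; simpa using congrArg Fin.val h
  have h00ne : a0 * a0 ≠ 0 := hind4.ne_zero ⟨0, by omega⟩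
  have h1zne : a1 * z ≠ 0 := hind5.ne_zero ⟨1, by omega⟩
  have h01 : a0 * a1 = 0 := horth _ _ hne01
  have h10 : a1 * a0 = 0 := horth _ _ (Ne.symm hne01)
  -- every element of g 3 is a multiple of z
  have hspan3 : ∀ x ∈ g 3, ∃ c : ℝ, x = c • z := by
    intro x hx
    rw [h3, Submodule.mem_span_singleton] at hx
    obtain ⟨c, hc⟩ := hx
    exact ⟨c, hc.symm⟩
  -- d of a multiple of z
  have hdsz : ∀ c : ℝ, d (c • z) = c • (a0 * a0) := by
    intro c; rw [map_smul, hdz]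
  -- a closed element of g 3 is zero
  have hclosed3 : ∀ x ∈ g 3, d x = 0 → x = 0 := by
    intro x hx hdx
    obtain ⟨c, rfl⟩ := hspan3 x hx
    rw [hdsz] at hdx
    rcases smul_eq_zero.mp hdx with hc | hc
    · rw [hc, zero_smul]
    · exact absurd hc h00ne
  -- if d x = a0 * a0 with x ∈ g 3 then x = z
  have hxz : ∀ x ∈ g 3, d x = a0 * a0 → x = z := by
    intro x hx hdx
    obtain ⟨c, rfl⟩ := hspan3 x hx
    rw [hdsz] at hdx
    have hsub : (c - 1) • (a0 * a0) = 0 := by rw [sub_smul, one_smul, hdx, sub_self]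
    rcases smul_eq_zero.mp hsub with hc | hc
    · have : c = 1 := by linarith [sub_eq_zero.mp (by exact_mod_cast hc)]
      rw [this, one_smul]
    · exact absurd hc h00ne
  -- z * a1 = a1 * z
  have hcomm : z * a1 = a1 * z := by
    have h := hgc 3 2 z hz a1 (ha2 _)
    norm_num at h
    exact h
  refine ⟨⟨z, hz, 0, Submodule.zero_mem _, hdz, by rw [map_zero, h01]⟩, ?_, ?_⟩
  · -- nontriviality
    intro x hx y hy hdx hdy u hu v hv hdu hdv s hs heq
    have hxzz : x = z := hxz x hx hdx
    have hy0 : y = 0 := hclosed3 y hy (by rw [hdy, h01])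
    have hu0 : u = 0 := hclosed3 u hu hdu
    have hv0 : v = 0 := hclosed3 v hv hdv
    have hds : d s = 0 := hd4 s hs
    rw [hxzz, hy0, hu0, hv0, hds] at heq
    simp only [mul_zero, zero_add, add_zero] at heq
    rw [hcomm] at heq
    apply h1zne
    have hz0 : ((-1 : ℝ)) ^ (2 + 1) • (a1 * z) = 0 := heq
    rw [show ((-1 : ℝ)) ^ (2 + 1) = -1 by norm_num, neg_smul, one_smul, neg_eq_zero] at hz0
    exact hz0
  · -- non-formality
    rintro ⟨Y, φ, hd0, hφd, hφg, hinj, hsurj⟩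
    -- all of Y.g 3 is zero
    have hgB3 : ∀ b ∈ Y.g 3, b = 0 := by
      intro b hb
      obtain ⟨a', ha'mem, ha'cl, s, hs⟩ := hsurj 3 b hb (by rw [hd0]; rfl)
      have ha'0 : a' = 0 := hclosed3 a' ha'mem ha'cl
      rw [hd0] at hs
      have hb0 : φ a' - b = 0 := hs
      rw [ha'0, map_zero, zero_sub, neg_eq_zero] at hb0
      exact hb0
    have hφz : φ z = 0 := hgB3 _ (hφg 3 z hz)
    -- the element a1 * z is closed
    have hwcl : d (a1 * z) = 0 := by
      rw [hleib 2 a1 (ha2 _) z, hacl, zero_mul, zero_add, hdz, ← mul_assoc, h10, zero_mul,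
        smul_zero]
    have hwmem : a1 * z ∈ g 5 := by
      have := hmul 2 3 a1 (ha2 _) z hz
      norm_num at this
      exact this
    have hφw : φ (a1 * z) = 0 := by rw [map_mul, hφz, mul_zero]
    obtain ⟨c, hdc⟩ := hinj 5 (a1 * z) hwmem hwcl ⟨0, by rw [hd0, hφw]; rfl⟩
    letI := hint.chooseDecomposition
    have hproj := proj_lemma g d hdeg c
    rw [hdc, DirectSum.decompose_of_mem_same g hwmem] at hproj
    have hd40 : d ((DirectSum.decompose g c 4 : A)) = 0 :=
      hd4 _ (DirectSum.decompose g c 4).2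
    rw [hd40] at hproj
    exact h1zne hproj
end

section
/- With A = H*(M) ⊗ ∧(x), dx = ℓb − Σ_{i=1}^k aᵢ as above (blow-up of ℂP³ at k ≥ 2 points model), every defined triple Massey product of classes in H²(A) is trivial. In particular: ⟨[aᵢ],[aᵢ],[aᵢ]⟩ = 0; for i ≠ j, aᵢ² = −d(x·aᵢ) and aᵢ·aⱼ = 0, so ⟨[aᵢ],[aᵢ],[aⱼ]⟩ = [−x·aᵢ·aⱼ] = 0; and for pairwise distinct i, j, k, ⟨[aᵢ],[aⱼ],[a_k]⟩ = 0. -/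
/-- Triviality of a triple Massey product of degree-2 classes: some choice of
(degree-3) primitives x, y makes the Massey representative exact (by an element of
degree 4). -/
def MasseyTrivial2 {A : Type} [Ring A] [Algebra ℝ A]
    (g : ℕ → Submodule ℝ A) (d : A →ₗ[ℝ] A) (α β γ : A) : Prop :=
  ∃ x ∈ g 3, ∃ y ∈ g 3, ∃ s ∈ g 4,
    d x = α * β ∧ d y = β * γ ∧
    α * y + ((-1 : ℝ)) ^ (2 + 1) • (x * γ) = d s

/-- in the model A = H*(M) ⊗ ∧(x), dx = ℓb − Σaᵢ, of the circle bundle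
over the blow-up of ℂP³ at k ≥ 2 points, every defined triple Massey product of
degree-2 classes is trivial; in particular ⟨[aᵢ],[aᵢ],[aᵢ]⟩ = 0, aᵢ² = −d(x·aᵢ) and
⟨[aᵢ],[aᵢ],[aⱼ]⟩ = 0 for i ≠ j, and ⟨[aᵢ],[aⱼ],[a_l]⟩ = 0 for pairwise distinct
i, j, l. -/
theorem blowup_model_massey_trivial
    {A : Type} [Ring A] [Algebra ℝ A]
    (g : ℕ → Submodule ℝ A) (d : A →ₗ[ℝ] A) (hA : IsDGA g d)
    (k : ℕ) (hk : 2 ≤ k) (b : A) (a : Fin k → A) (x : A) (ℓ : ℕ) (hℓ : 0 < ℓ)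
    (hb2 : b ∈ g 2) (ha2 : ∀ i, a i ∈ g 2) (hx1 : x ∈ g 1)
    (hba : ∀ i, b * a i = 0) (horth : ∀ i j, i ≠ j → a i * a j = 0)
    (hcube : ∀ i, a i * a i * a i = -(b * b * b))
    (hbcl : d b = 0) (hacl : ∀ i, d (a i) = 0)
    (hdx : d x = (ℓ : ℝ) • b - ∑ i, a i) :
    -- aᵢ² = −d(x·aᵢ)
    (∀ i, a i * a i = -(d (x * a i))) ∧
    -- ⟨[aᵢ],[aᵢ],[aᵢ]⟩ is trivial
    (∀ i, MasseyTrivial2 g d (a i) (a i) (a i)) ∧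
    -- ⟨[aᵢ],[aᵢ],[aⱼ]⟩ is trivial for i ≠ j
    (∀ i j, i ≠ j → MasseyTrivial2 g d (a i) (a i) (a j)) ∧
    -- ⟨[aᵢ],[aⱼ],[a_l]⟩ is trivial for pairwise distinct i, j, l
    (∀ i j l, i ≠ j → j ≠ l → i ≠ l → MasseyTrivial2 g d (a i) (a j) (a l)) ∧
    -- every defined triple Massey product of classes in H²(A) is trivial
    (∀ α ∈ Submodule.span ℝ (Set.range a), ∀ β ∈ Submodule.span ℝ (Set.range a),
      ∀ γ ∈ Submodule.span ℝ (Set.range a),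
        (∃ x' ∈ g 3, d x' = α * β) → (∃ y' ∈ g 3, d y' = β * γ) →
          MasseyTrivial2 g d α β γ) := by

  obtain ⟨-, -, hmul, -, -, hleib, hcomm⟩ := hA
  have hterm : ∀ (c e : Fin k → ℝ) (i j : Fin k),
      (c i • a i) * (e j • a j) = (c i * e j) • (a i * a j) := by
    intro c e i j
    rw [smul_mul_assoc, mul_smul_comm, smul_smul]
  have hdiag : ∀ (c e : Fin k → ℝ),
      (∑ i, c i • a i) * (∑ i, e i • a i) = ∑ i, (c i * e i) • (a i * a i) := by
    intro c e
    rw [Finset.sum_mul]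
    refine Finset.sum_congr rfl fun i _ => ?_
    rw [Finset.mul_sum]
    have hs : (∑ j, (c i • a i) * (e j • a j)) = (c i • a i) * (e i • a i) :=
      Finset.sum_eq_single i
        (fun j _ hj => by rw [hterm c e i j, horth i j (Ne.symm hj), smul_zero])
        (fun h' => absurd (Finset.mem_univ i) h')
    rw [hs, hterm c e i i]
  have hdxa : ∀ i, d (x * a i) = -(a i * a i) := by
    intro i
    have h := hleib 1 x hx1 (a i)
    rw [hacl i, mul_zero, smul_zero, add_zero, hdx, sub_mul, smul_mul_assoc, hba i,
      smul_zero, Finset.sum_mul, zero_sub] at h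
    rw [h, Finset.sum_eq_single i (fun j _ hj => horth j i hj)
      (fun h' => absurd (Finset.mem_univ i) h')]
  have hdxv : ∀ t : Fin k → ℝ, d (x * ∑ i, t i • a i) = -(∑ i, t i • (a i * a i)) := by
    intro t
    rw [Finset.mul_sum]
    simp only [mul_smul_comm, map_sum, map_smul, hdxa, smul_neg, Finset.sum_neg_distrib]
  have hx2 : ∀ z ∈ g 2, z * x = x * z := by
    intro z hz
    have h := hcomm 2 1 z hz x hx1
    rw [show ((-1:ℝ))^(2*1) = 1 by norm_num, one_smul] at h
    exact h
  have hv2 : ∀ t : Fin k → ℝ, (∑ i, t i • a i) ∈ g 2 :=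
    fun t => Submodule.sum_mem _ (fun i _ => Submodule.smul_mem _ _ (ha2 i))
  have hg3 : ∀ z ∈ g 2, x * z ∈ g 3 := fun z hz => hmul 1 2 x hx1 z hz
  have Hgen : ∀ α ∈ Submodule.span ℝ (Set.range a), ∀ β ∈ Submodule.span ℝ (Set.range a),
      ∀ γ ∈ Submodule.span ℝ (Set.range a), MasseyTrivial2 g d α β γ := by
    intro α hα β hβ γ hγ
    obtain ⟨c, rfl⟩ := (Submodule.mem_span_range_iff_exists_fun ℝ).mp hα
    obtain ⟨e, rfl⟩ := (Submodule.mem_span_range_iff_exists_fun ℝ).mp hβ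
    obtain ⟨f, rfl⟩ := (Submodule.mem_span_range_iff_exists_fun ℝ).mp hγ
    refine ⟨-(x * ∑ i, (c i * e i) • a i), Submodule.neg_mem _ (hg3 _ (hv2 _)),
      -(x * ∑ i, (e i * f i) • a i), Submodule.neg_mem _ (hg3 _ (hv2 _)),
      0, Submodule.zero_mem _, ?_, ?_, ?_⟩
    · rw [map_neg, hdxv, neg_neg, hdiag]
    · rw [map_neg, hdxv, neg_neg, hdiag]
    · rw [map_zero, show ((-1:ℝ))^(2+1) = -1 by norm_num, neg_one_smul, mul_neg,
        neg_mul, neg_neg, ← mul_assoc, hx2 _ (hv2 c), mul_assoc,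
        hdiag c (fun i => e i * f i),
        show (∑ i, (c i * (e i * f i)) • (a i * a i))
            = ∑ i, ((c i * e i) * f i) • (a i * a i) from
          Finset.sum_congr rfl fun i _ => by rw [mul_assoc],
        ← hdiag (fun i => c i * e i) f, mul_assoc, neg_add_cancel]
  have hmem : ∀ i, a i ∈ Submodule.span ℝ (Set.range a) :=
    fun i => Submodule.subset_span ⟨i, rfl⟩
  exact ⟨fun i => by rw [hdxa i, neg_neg],
    fun i => Hgen _ (hmem i) _ (hmem i) _ (hmem i),
    fun i j _ => Hgen _ (hmem i) _ (hmem i) _ (hmem j),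
    fun i j l _ _ _ => Hgen _ (hmem i) _ (hmem j) _ (hmem l),
    fun α hα β hβ γ hγ _ _ => Hgen α hα β hβ γ hγ⟩
end
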